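/- arXiv:2005.03505 — 3 statements merged into one kernel-verified Lean document; each statement's English description precedes it below -/
import Mathlib

section
/- If f belongs to the Lizorkin space S_0(ℝ) (Schwartz functions on ℝ all of whose moments vanish), then the function g(x) = ∫_{-∞}^x f(t) dt is well defined, belongs to S_0(ℝ), and satisfies 𝓕f(ξ) = 2πi ξ · 𝓕g(ξ) for all ξ ∈ ℝ. -/
/-!
All moments of `f` vanish, in particular `∫ f = 0`, so the primitive `∫_{-∞}^x f` also equals
`-∫_x^∞ f`. Using the first form for `x ≤ 0` and the second for `x ≥ 0`, the factor `|x|^k` is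
dominated by `|t|^k` under the integral, which gives the decay of the primitive; its higher
derivatives are those of `f`. Integration by parts gives `(m + 1) ∫ x^m g = -∫ x^(m+1) f = 0`,
and the Fourier identity is the rule for the transform of a derivative.
-/

open MeasureTheory Set
open scoped FourierTransform

section Primitive

variable {E : Type*} [NormedAddCommGroup E] [NormedSpace ℝ E]

theorem hasDerivAt_integral_Iic [CompleteSpace E] {f : ℝ → E} (hf : Integrable f)
    (hc : Continuous f) (x : ℝ) : HasDerivAt (fun y ↦ ∫ t in Iic y, f t) (f x) x := by
  have h : HasDerivAt (fun y ↦ ∫ t in (0 : ℝ)..y, f t) (f x) x :=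
    intervalIntegral.integral_hasDerivAt_right hf.intervalIntegrable
      hc.stronglyMeasurable.stronglyMeasurableAtFilter hc.continuousAt
  refine (h.const_add (∫ t in Iic 0, f t)).congr_of_eventuallyEq (.of_forall fun y ↦ ?_)
  simp only [← intervalIntegral.integral_Iic_sub_Iic hf.integrableOn hf.integrableOn,
    add_sub_cancel]

theorem deriv_integral_Iic [CompleteSpace E] {f : ℝ → E} (hf : Integrable f)
    (hc : Continuous f) : deriv (fun y ↦ ∫ t in Iic y, f t) = f :=
  funext fun x ↦ (hasDerivAt_integral_Iic hf hc x).deriv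

theorem integral_Iic_eq_neg_integral_Ioi {f : ℝ → E} (hf : Integrable f)
    (h₀ : ∫ t, f t = 0) (x : ℝ) : ∫ t in Iic x, f t = -∫ t in Ioi x, f t := by
  rw [eq_neg_iff_add_eq_zero, intervalIntegral.integral_Iic_add_Ioi hf.integrableOn
    hf.integrableOn, h₀]

theorem pow_mul_norm_setIntegral_le_integral {f : ℝ → E} {s : Set ℝ} (hs : MeasurableSet s)
    {x : ℝ} (hx : ∀ t ∈ s, ‖x‖ ≤ ‖t‖) (k : ℕ)
    (hf : Integrable fun t ↦ ‖t‖ ^ k * ‖f t‖) :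
    ‖x‖ ^ k * ‖∫ t in s, f t‖ ≤ ∫ t, ‖t‖ ^ k * ‖f t‖ :=
  calc ‖x‖ ^ k * ‖∫ t in s, f t‖ = ‖∫ t in s, ‖x‖ ^ k • f t‖ := by
        rw [integral_smul, norm_smul, norm_pow, norm_norm]
    _ ≤ ∫ t in s, ‖t‖ ^ k * ‖f t‖ := by
        refine norm_integral_le_of_norm_le hf.integrableOn ((ae_restrict_iff' hs).2 ?_)
        filter_upwards with t ht
        rw [norm_smul, norm_pow, norm_norm]
        gcongr
        exact hx t ht
    _ ≤ ∫ t, ‖t‖ ^ k * ‖f t‖ :=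
        setIntegral_le_integral hf (.of_forall fun t ↦ by positivity)

namespace SchwartzMap

theorem pow_mul_norm_integral_Iic_le (f : 𝓢(ℝ, E)) (h₀ : ∫ t, f t = 0) (k : ℕ) (x : ℝ) :
    ‖x‖ ^ k * ‖∫ t in Iic x, f t‖ ≤ ∫ t, ‖t‖ ^ k * ‖f t‖ := by
  rcases le_total x 0 with hx | hx
  · refine pow_mul_norm_setIntegral_le_integral measurableSet_Iic (fun t ht ↦ ?_) k
      (f.integrable_pow_mul volume k)
    simp only [Real.norm_eq_abs, abs_of_nonpos hx, abs_of_nonpos ((mem_Iic.1 ht).trans hx)]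
    exact neg_le_neg ht
  · rw [integral_Iic_eq_neg_integral_Ioi f.integrable h₀, norm_neg]
    refine pow_mul_norm_setIntegral_le_integral measurableSet_Ioi (fun t ht ↦ ?_) k
      (f.integrable_pow_mul volume k)
    simp only [Real.norm_eq_abs, abs_of_nonneg hx, abs_of_nonneg (hx.trans (mem_Ioi.1 ht).le)]
    exact le_of_lt ht

variable [CompleteSpace E]

noncomputable def primitive (f : 𝓢(ℝ, E)) (h₀ : ∫ t, f t = 0) : 𝓢(ℝ, E) where
  toFun x := ∫ t in Iic x, f t
  smooth' := by
    rw [contDiff_infty_iff_deriv, deriv_integral_Iic f.integrable f.continuous]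
    exact ⟨fun x ↦ (hasDerivAt_integral_Iic f.integrable f.continuous x).differentiableAt,
      f.smooth'⟩
  decay' k n := by
    cases n with
    | zero => exact ⟨_, fun x ↦ by simpa using f.pow_mul_norm_integral_Iic_le h₀ k x⟩
    | succ n =>
      obtain ⟨C, hC⟩ := f.decay' k n
      refine ⟨C, fun x ↦ ?_⟩
      rw [norm_iteratedFDeriv_eq_norm_iteratedDeriv, iteratedDeriv_succ',
        deriv_integral_Iic f.integrable f.continuous,
        ← norm_iteratedFDeriv_eq_norm_iteratedDeriv]
      exact hC x

variable (f : 𝓢(ℝ, E)) (h₀ : ∫ t, f t = 0)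

theorem primitive_apply (x : ℝ) : primitive f h₀ x = ∫ t in Iic x, f t := rfl

theorem deriv_primitive : deriv (primitive f h₀) = f :=
  deriv_integral_Iic f.integrable f.continuous

end SchwartzMap

end Primitive

namespace SchwartzMap

theorem integrable_ofReal_pow_mul (g : 𝓢(ℝ, ℂ)) (m : ℕ) :
    Integrable fun x : ℝ ↦ (x : ℂ) ^ m * g x := by
  refine (g.integrable_pow_mul volume m).mono' (by fun_prop) (.of_forall fun x ↦ ?_)
  rw [norm_mul, norm_pow, Complex.norm_real]

theorem integral_ofReal_pow_succ_mul_deriv (g : 𝓢(ℝ, ℂ)) (m : ℕ) :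
    ∫ x : ℝ, (x : ℂ) ^ (m + 1) * deriv g x = -(((m : ℂ) + 1) * ∫ x : ℝ, (x : ℂ) ^ m * g x) := by
  have hu (x : ℝ) : HasDerivAt (fun y : ℝ ↦ (y : ℂ) ^ (m + 1)) (((m : ℂ) + 1) * (x : ℂ) ^ m) x := by
    simpa using (hasDerivAt_pow (m + 1) (x : ℂ)).comp_ofReal
  have hu'v : Integrable fun x : ℝ ↦ ((m : ℂ) + 1) * (x : ℂ) ^ m * g x := by
    simpa only [mul_assoc] using (g.integrable_ofReal_pow_mul m).const_mul ((m : ℂ) + 1)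
  rw [← integral_const_mul]
  simp_rw [← mul_assoc]
  exact integral_mul_deriv_eq_deriv_mul_of_integrable (fun x _ ↦ hu x)
    (fun x _ ↦ g.hasDerivAt x) ((derivCLM ℝ ℂ g).integrable_ofReal_pow_mul (m + 1)) hu'v
    (g.integrable_ofReal_pow_mul (m + 1))

end SchwartzMap

/-- integration of a Lizorkin function gives a Lizorkin function whose
Fourier transform divides that of `f` by `2πiξ`. -/
theorem lizorkin_antiderivative
    (f : SchwartzMap ℝ ℂ)
    (hmom : ∀ m : ℕ, ∫ x : ℝ, (x : ℂ) ^ m * f x = 0) :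
    (∀ x : ℝ, IntegrableOn (⇑f) (Set.Iic x)) ∧
    (∃ g : SchwartzMap ℝ ℂ,
      (∀ x : ℝ, g x = ∫ t in Set.Iic x, f t) ∧
      (∀ m : ℕ, ∫ x : ℝ, (x : ℂ) ^ m * g x = 0) ∧
      (∀ ξ : ℝ, 𝓕 (⇑f) ξ = (2 * Real.pi * Complex.I * (ξ : ℂ)) * 𝓕 (⇑g) ξ)) := by
  have h₀ : ∫ x, f x = 0 := by simpa using hmom 0
  set g := f.primitive h₀
  have hg' : deriv g = f := f.deriv_primitive h₀
  refine ⟨fun x ↦ f.integrable.integrableOn, g, f.primitive_apply h₀, fun m ↦ ?_, fun ξ ↦ ?_⟩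
  · have h := g.integral_ofReal_pow_succ_mul_deriv m
    rw [hg', hmom (m + 1), zero_eq_neg, mul_eq_zero] at h
    exact h.resolve_left (Nat.cast_add_one_ne_zero m)
  · have h := Real.fourier_deriv g.integrable g.differentiable (hg' ▸ f.integrable)
    rw [hg'] at h
    exact congrFun h ξ
end

section
/- Let f ∈ S_0(ℝ) and g(x) = ∫_{-∞}^x f(t) dt. Then for every k ∈ ℕ, sup_{x∈ℝ} ⟨x⟩^k |g(x)| ≤ C · ρ_{2k+4}(f) for some constant C > 0 independent of f, where ρ_ν(φ) = sup_{x∈ℝ, l≤ν} ⟨x⟩^ν |φ^{(l)}(x)| and ⟨x⟩ = (1+x²)^{1/2}. -/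
/-!
For `x ≤ 0` integrate over `(-∞, x]` directly; for `x > 0` the vanishing of `∫ f` turns
`∫_{-∞}^x f` into `-∫_x^∞ f`. Either way the range of integration lies in `{t | |x| ≤ |t|}`,
where `⟨x⟩^k ‖f t‖ ≤ ⟨t⟩^(k+2) ‖f t‖ / (1 + t²)` and `⟨t⟩^(k+2) ‖f t‖ ≤ ρ_{2k+4}(f)`;
integrating `(1 + t²)⁻¹` gives the constant `π`.
-/

open MeasureTheory Complex
open scoped FourierTransform

noncomputable section

/-- Japanese bracket ⟨x⟩ = (1+x²)^{1/2}. -/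
def jp (x : ℝ) : ℝ := Real.sqrt (1 + x ^ 2)

/-- Schwartz seminorms ρ_ν(φ) = sup_{x, l ≤ ν} ⟨x⟩^ν |φ^{(l)}(x)|. -/
def rho1 (ν : ℕ) (f : ℝ → ℂ) : ℝ :=
  ⨆ p : ℝ × Fin (ν + 1), jp p.1 ^ ν * ‖iteratedDeriv p.2 f p.1‖

lemma jp_pos (x : ℝ) : 0 < jp x := Real.sqrt_pos.2 (by positivity)

lemma jp_sq (x : ℝ) : jp x ^ 2 = 1 + x ^ 2 := Real.sq_sqrt (by positivity)

lemma one_le_jp (x : ℝ) : 1 ≤ jp x := by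
  nlinarith [jp_sq x, jp_pos x, sq_nonneg x]

lemma jp_le_jp_of_abs_le {x t : ℝ} (h : |x| ≤ |t|) : jp x ≤ jp t :=
  Real.sqrt_le_sqrt (by nlinarith [sq_abs x, sq_abs t, abs_nonneg x])

lemma jp_le_one_add_abs (x : ℝ) : jp x ≤ 1 + |x| := by
  rw [jp, ← Real.sqrt_sq (by positivity : (0 : ℝ) ≤ 1 + |x|)]
  exact Real.sqrt_le_sqrt (by nlinarith [abs_nonneg x, sq_abs x])

lemma jp_pow_mul_one_add_sq_le {x t : ℝ} (h : |x| ≤ |t|) (k : ℕ) :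
    jp x ^ k * (1 + t ^ 2) ≤ jp t ^ (k + 2) := by
  rw [pow_add, jp_sq]
  gcongr
  exacts [(jp_pos x).le, jp_le_jp_of_abs_le h]

lemma bddAbove_rho1_range (ν : ℕ) (f : SchwartzMap ℝ ℂ) :
    BddAbove (Set.range fun p : ℝ × Fin (ν + 1) => jp p.1 ^ ν * ‖iteratedDeriv p.2 f p.1‖) := by
  refine ⟨2 ^ ν * (Finset.Iic (ν, ν)).sup (fun m => SchwartzMap.seminorm ℝ m.1 m.2) f, ?_⟩
  rintro _ ⟨⟨t, l⟩, rfl⟩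
  calc jp t ^ ν * ‖iteratedDeriv l f t‖
      ≤ (1 + ‖t‖) ^ ν * ‖iteratedFDeriv ℝ l f t‖ := by
        rw [← norm_iteratedFDeriv_eq_norm_iteratedDeriv, Real.norm_eq_abs]
        gcongr
        exacts [(jp_pos t).le, jp_le_one_add_abs t]
    _ ≤ _ := SchwartzMap.one_add_le_sup_seminorm_apply (m := (ν, ν)) le_rfl l.is_le f t

lemma jp_pow_mul_norm_le_rho1 {n ν : ℕ} (hnν : n ≤ ν) (f : SchwartzMap ℝ ℂ) (t : ℝ) :
    jp t ^ n * ‖f t‖ ≤ rho1 ν f :=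
  calc jp t ^ n * ‖f t‖ ≤ jp t ^ ν * ‖f t‖ := by gcongr; exact one_le_jp t
    _ ≤ rho1 ν f := by
      simpa [rho1] using le_ciSup (bddAbove_rho1_range ν f) (t, 0)

lemma setIntegral_Iic_eq_neg_setIntegral_Ioi {E : Type*} [NormedAddCommGroup E]
    [NormedSpace ℝ E] {f : ℝ → E} (hf : Integrable f) (hf₀ : ∫ t, f t = 0) (x : ℝ) :
    ∫ t in Set.Iic x, f t = -∫ t in Set.Ioi x, f t := by
  rw [eq_neg_iff_add_eq_zero, intervalIntegral.integral_Iic_add_Ioi hf.integrableOn hf.integrableOn,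
    hf₀]

lemma jp_pow_mul_norm_setIntegral_le {E : Type*} [NormedAddCommGroup E] [NormedSpace ℝ E]
    {f : ℝ → E} {k : ℕ} {M : ℝ} (hf : ∀ t, jp t ^ (k + 2) * ‖f t‖ ≤ M) {x : ℝ} {S : Set ℝ}
    (hS : MeasurableSet S) (hxS : ∀ t ∈ S, |x| ≤ |t|) :
    jp x ^ k * ‖∫ t in S, f t‖ ≤ Real.pi * M := by
  have hjx : 0 < jp x ^ k := pow_pos (jp_pos x) k
  have hM : 0 ≤ M := (mul_nonneg (pow_nonneg (jp_pos 0).le _) (norm_nonneg _)).trans (hf 0)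
  set g : ℝ → ℝ := fun t => M / jp x ^ k * (1 + t ^ 2)⁻¹
  have hg : Integrable g := integrable_inv_one_add_sq.const_mul _
  have hfg : ∀ t ∈ S, ‖f t‖ ≤ g t := fun t ht => by
    change ‖f t‖ ≤ M / jp x ^ k * (1 + t ^ 2)⁻¹
    rw [← div_eq_mul_inv, div_div, le_div_iff₀ (by positivity)]
    calc ‖f t‖ * (jp x ^ k * (1 + t ^ 2)) = jp x ^ k * (1 + t ^ 2) * ‖f t‖ := mul_comm _ _
      _ ≤ jp t ^ (k + 2) * ‖f t‖ := by gcongr; exact jp_pow_mul_one_add_sq_le (hxS t ht) k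
      _ ≤ M := hf t
  have hint : ‖∫ t in S, f t‖ ≤ M / jp x ^ k * Real.pi :=
    calc ‖∫ t in S, f t‖ ≤ ∫ t in S, g t :=
          norm_integral_le_of_norm_le hg.integrableOn
            ((ae_restrict_iff' hS).2 (ae_of_all _ hfg))
      _ ≤ ∫ t, g t := setIntegral_le_integral hg (ae_of_all _ fun t => by positivity)
      _ = M / jp x ^ k * Real.pi := by rw [integral_const_mul, integral_univ_inv_one_add_sq]
  calc jp x ^ k * ‖∫ t in S, f t‖ ≤ jp x ^ k * (M / jp x ^ k * Real.pi) := by gcongr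
    _ = Real.pi * M := by field_simp

/-- bound on the antiderivative of a Lizorkin function. -/
theorem antiderivative_bound (k : ℕ) :
    ∃ C : ℝ, 0 < C ∧ ∀ (f : SchwartzMap ℝ ℂ),
      (∀ m : ℕ, ∫ x : ℝ, (x : ℂ) ^ m * f x = 0) →
      ∀ x : ℝ, jp x ^ k * ‖∫ t in Set.Iic x, f t‖ ≤ C * rho1 (2 * k + 4) ⇑f := by
  refine ⟨Real.pi, Real.pi_pos, fun f hmoments x => ?_⟩
  have hdecay (t : ℝ) : jp t ^ (k + 2) * ‖f t‖ ≤ rho1 (2 * k + 4) f :=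
    jp_pow_mul_norm_le_rho1 (by omega) f t
  rcases le_or_gt x 0 with hx | hx
  · exact jp_pow_mul_norm_setIntegral_le hdecay measurableSet_Iic
      fun t ht => abs_le_abs_of_nonpos hx ht
  · have hmean : ∫ t, f t = 0 := by simpa using hmoments 0
    rw [setIntegral_Iic_eq_neg_setIntegral_Ioi f.integrable hmean, norm_neg]
    exact jp_pow_mul_norm_setIntegral_le hdecay measurableSet_Ioi
      fun t ht => abs_le_abs_of_nonneg hx.le (le_of_lt ht)

end
end

section
/- The Fourier transform is a linear isomorphism from the Lizorkin space S_0(ℝ^d) onto the Fourier–Lizorkin space Ŝ_0(ℝ^d) of Schwartz functions all of whose partial derivatives vanish at the origin. -/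
/-!
Differentiating under the Fourier integral turns `∂ᵢ` into multiplication by `-2πi xᵢ`, so
`∂^m (𝓕 f) 0 = (-2πi)^|m| ∫ x^m f(x) dx`: the derivatives of `𝓕 f` at the origin are nonzero
multiples of the moments of `f`. As `𝓕` is a bijection of the Schwartz space, it therefore maps
the Lizorkin space bijectively onto the Fourier–Lizorkin space.
-/

open MeasureTheory
open scoped FourierTransform

noncomputable section

abbrev Ed (d : ℕ) := EuclideanSpace ℝ (Fin d)

/-- monomial x^m = ∏ x_i^{m_i} -/
def monom {d : ℕ} (m : Fin d → ℕ) (x : Ed d) : ℝ := ∏ i, (x i) ^ (m i)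

/-- partial derivative in the i-th coordinate direction -/
def pderiv1 {d : ℕ} (i : Fin d) (f : Ed d → ℂ) : Ed d → ℂ :=
  fun x => fderiv ℝ f x (EuclideanSpace.single i 1)

/-- multi-index partial derivative ∂^m -/
def mpderiv {d : ℕ} (m : Fin d → ℕ) (f : Ed d → ℂ) : Ed d → ℂ :=
  (List.finRange d).foldr (fun i g => (pderiv1 i)^[m i] g) f

/-- Lizorkin membership: Schwartz with all vanishing moments. -/
def IsLizorkin {d : ℕ} (f : Ed d → ℂ) : Prop :=
  (∃ g : SchwartzMap (Ed d) ℂ, ⇑g = f) ∧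
    ∀ m : Fin d → ℕ, ∫ x : Ed d, (monom m x : ℝ) • f x = 0

/-- Fourier–Lizorkin membership: Schwartz with all partial derivatives vanishing at 0. -/
def IsFourierLizorkin {d : ℕ} (f : Ed d → ℂ) : Prop :=
  (∃ g : SchwartzMap (Ed d) ℂ, ⇑g = f) ∧
    ∀ m : Fin d → ℕ, mpderiv m f 0 = 0

open SchwartzMap FourierTransform LineDeriv Complex
open scoped Real

lemma fourier_apply_zero {V E : Type*} [NormedAddCommGroup V] [InnerProductSpace ℝ V]
    [FiniteDimensional ℝ V] [MeasurableSpace V] [BorelSpace V] [NormedAddCommGroup E]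
    [NormedSpace ℂ E] (f : V → E) :
    𝓕 f 0 = ∫ x, f x := by
  simp [Real.fourier_eq]

lemma SchwartzMap.fourier_coe_injective {V E : Type*} [NormedAddCommGroup V]
    [InnerProductSpace ℝ V] [FiniteDimensional ℝ V] [MeasurableSpace V] [BorelSpace V]
    [NormedAddCommGroup E] [NormedSpace ℂ E] [CompleteSpace E] :
    Function.Injective fun F : 𝓢(V, E) => 𝓕 ⇑F :=
  fun _ _ h => (fourierCLE ℂ 𝓢(V, E)).injective (DFunLike.coe_injective h)

variable {d : ℕ}

-- Stated through `inner` so that it matches `SchwartzMap.lineDerivOp_fourier_eq`.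
def mulCoord (i : Fin d) (F : 𝓢(Ed d, ℂ)) : 𝓢(Ed d, ℂ) :=
  -(2 * π * I) • smulLeftCLM ℂ (inner ℝ · (EuclideanSpace.single i (1 : ℝ))) F

lemma mulCoord_apply (i : Fin d) (F : 𝓢(Ed d, ℂ)) (x : Ed d) :
    mulCoord i F x = (-(2 * π * I) * x i) • F x := by
  have : (inner ℝ · (EuclideanSpace.single i (1 : ℝ)) : Ed d → ℝ).HasTemperateGrowth :=
    ((innerSL ℝ).flip _).hasTemperateGrowth
  rw [mulCoord, smul_apply, smulLeftCLM_apply_apply this, EuclideanSpace.inner_single_right]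
  simp [mul_assoc]

lemma pderiv1_eq_lineDerivOp (i : Fin d) (F : 𝓢(Ed d, ℂ)) :
    pderiv1 i F = ⇑(∂_{EuclideanSpace.single i (1 : ℝ)} F : 𝓢(Ed d, ℂ)) :=
  funext fun x => (lineDerivOp_apply_eq_fderiv _ F x).symm

lemma pderiv1_fourier (i : Fin d) (F : 𝓢(Ed d, ℂ)) :
    pderiv1 i (𝓕 ⇑F) = 𝓕 ⇑(mulCoord i F) := by
  rw [← fourier_coe, pderiv1_eq_lineDerivOp, lineDerivOp_fourier_eq]
  rfl

lemma iterate_pderiv1_fourier (i : Fin d) (n : ℕ) (F : 𝓢(Ed d, ℂ)) :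
    (pderiv1 i)^[n] (𝓕 ⇑F) = 𝓕 ⇑((mulCoord i)^[n] F) := by
  induction n with
  | zero => rfl
  | succ n ih => rw [Function.iterate_succ_apply', Function.iterate_succ_apply', ih,
      pderiv1_fourier]

lemma iterate_mulCoord_apply (i : Fin d) (n : ℕ) (F : 𝓢(Ed d, ℂ)) (x : Ed d) :
    ((mulCoord i)^[n] F) x = (-(2 * π * I) * x i) ^ n • F x := by
  induction n with
  | zero => simp
  | succ n ih => rw [Function.iterate_succ_apply', mulCoord_apply, ih, smul_smul, ← pow_succ']

def mulMonom (m : Fin d → ℕ) (F : 𝓢(Ed d, ℂ)) : 𝓢(Ed d, ℂ) :=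
  (List.finRange d).foldr (fun i G => (mulCoord i)^[m i] G) F

lemma mpderiv_fourier (m : Fin d → ℕ) (F : 𝓢(Ed d, ℂ)) :
    mpderiv m (𝓕 ⇑F) = 𝓕 ⇑(mulMonom m F) := by
  rw [mpderiv, mulMonom]
  induction List.finRange d with
  | nil => rfl
  | cons i l ih => rw [List.foldr_cons, List.foldr_cons, ih, iterate_pderiv1_fourier]

lemma mulMonom_apply (m : Fin d → ℕ) (F : 𝓢(Ed d, ℂ)) (x : Ed d) :
    mulMonom m F x = ((∏ i, (-(2 * π * I)) ^ m i) * monom m x) • F x := by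
  have hfold : ∀ l : List (Fin d), (l.foldr (fun i G => (mulCoord i)^[m i] G) F) x
      = (l.map fun i => (-(2 * π * I) * x i) ^ m i).prod • F x := by
    intro l
    induction l with
    | nil => simp
    | cons i l ih => rw [List.foldr_cons, iterate_mulCoord_apply, ih, smul_smul, List.map_cons,
        List.prod_cons]
  rw [mulMonom, hfold, ← Fin.prod_univ_def, monom]
  push_cast
  simp_rw [mul_pow, Finset.prod_mul_distrib]

lemma mpderiv_fourier_apply_zero (m : Fin d → ℕ) (F : 𝓢(Ed d, ℂ)) :
    mpderiv m (𝓕 ⇑F) 0 = (∏ i, (-(2 * π * I)) ^ m i) * ∫ x, (monom m x : ℝ) • F x := by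
  simp_rw [mpderiv_fourier, fourier_apply_zero, mulMonom_apply, mul_smul, integral_smul,
    Complex.coe_smul, smul_eq_mul]

lemma mpderiv_fourier_apply_zero_eq_zero_iff (m : Fin d → ℕ) (F : 𝓢(Ed d, ℂ)) :
    mpderiv m (𝓕 ⇑F) 0 = 0 ↔ ∫ x, (monom m x : ℝ) • F x = 0 := by
  have hc : ∏ i, (-(2 * π * I)) ^ m i ≠ 0 :=
    Finset.prod_ne_zero_iff.2 fun i _ => pow_ne_zero _ (by simp [Real.pi_ne_zero, I_ne_zero])
  rw [mpderiv_fourier_apply_zero, mul_eq_zero, or_iff_right hc]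

lemma isLizorkin_iff_isFourierLizorkin_fourier (F : 𝓢(Ed d, ℂ)) :
    IsLizorkin ⇑F ↔ IsFourierLizorkin (𝓕 ⇑F) :=
  ⟨fun h => ⟨⟨𝓕 F, rfl⟩, fun m => (mpderiv_fourier_apply_zero_eq_zero_iff m F).2 (h.2 m)⟩,
    fun h => ⟨⟨F, rfl⟩, fun m => (mpderiv_fourier_apply_zero_eq_zero_iff m F).1 (h.2 m)⟩⟩

/-- the Fourier transform is a (linear) bijection from the Lizorkin space
onto the Fourier–Lizorkin space. -/
theorem fourier_lizorkin_iso {d : ℕ} :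
    (∀ f : Ed d → ℂ, IsLizorkin f → IsFourierLizorkin (𝓕 f)) ∧
    (∀ g : Ed d → ℂ, IsFourierLizorkin g →
      ∃! f : Ed d → ℂ, IsLizorkin f ∧ 𝓕 f = g) := by
  refine ⟨fun f hf => ?_, fun g hg => ?_⟩
  · obtain ⟨F, rfl⟩ := hf.1
    exact (isLizorkin_iff_isFourierLizorkin_fourier F).1 hf
  · obtain ⟨G, rfl⟩ := hg.1
    set F : 𝓢(Ed d, ℂ) := 𝓕⁻ G
    have hG : 𝓕 ⇑F = ⇑G := by rw [← fourier_coe, fourier_fourierInv_eq]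
    refine ⟨⇑F, ⟨(isLizorkin_iff_isFourierLizorkin_fourier _).2 (hG ▸ hg), hG⟩, ?_⟩
    rintro _ ⟨⟨⟨F', rfl⟩, -⟩, hF'⟩
    exact congrArg DFunLike.coe (fourier_coe_injective (hF'.trans hG.symm))

end
end
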